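/- arXiv:1809.05226 — 5 statements merged into one kernel-verified Lean document; each statement's English description precedes it below -/
import Mathlib

section
/- Let g : ℕ → ℝ be a function taking values in {-1, 0, 1}, and suppose there exists M ≥ 0 such that for every k, |∑_{n=0}^{k} g(n)| ≤ M. Let f : ℝ → ℝ be a nonnegative, continuously differentiable function with f(x) → 0 as x → ∞, f'(x) < 0, |f'| decreasing, and ∫_0^∞ |f'(x)| dx < ∞. Then |∑_{n=0}^{∞} g(n) f(n)| ≤ ∑_{n=0}^{⌊M⌋} f(n). -/
/-!
Summation by parts writes `∑_{i<n} g i f i` as a combination of the partial sums `S_k` of `g` with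
the nonnegative weights `f (n-1)` and `f i - f (i+1)`. The partial sums are integers bounded by `M`,
hence by `⌊M⌋`, and by `k`; so `|S_k| ≤ min k ⌊M⌋`, which is the partial sum of the indicator of
`[0, ⌊M⌋)`. Substituting that indicator for `g` bounds every partial sum of the series by
`∑_{n<⌊M⌋} f n`, and the bound passes to the limit.
-/

open MeasureTheory Filter Finset

theorem abs_sum_range_mul_le_of_abs_partialSum_le {a e F : ℕ → ℝ} (hF : Antitone F)
    (hF0 : ∀ i, 0 ≤ F i) (hae : ∀ k, |∑ i ∈ range k, a i| ≤ ∑ i ∈ range k, e i) (n : ℕ) :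
    |∑ i ∈ range n, a i * F i| ≤ ∑ i ∈ range n, e i * F i := by
  have hAbel : ∀ c : ℕ → ℝ, ∑ i ∈ range n, c i * F i = F (n - 1) * ∑ i ∈ range n, c i
      + ∑ i ∈ range (n - 1), (F i - F (i + 1)) * ∑ j ∈ range (i + 1), c j := fun c => by
    have := sum_range_by_parts F c n
    simp only [smul_eq_mul] at this
    rw [sum_congr rfl fun i _ => mul_comm (c i) (F i), this, sub_eq_add_neg, ← sum_neg_distrib]
    simp only [← neg_mul, neg_sub]
  have hstep : ∀ i, 0 ≤ F i - F (i + 1) := fun i => sub_nonneg.2 (hF i.le_succ)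
  rw [hAbel, hAbel]
  calc _ ≤ |F (n - 1) * ∑ i ∈ range n, a i|
        + ∑ i ∈ range (n - 1), |(F i - F (i + 1)) * ∑ j ∈ range (i + 1), a j| :=
        (abs_add_le _ _).trans (add_le_add_right (abs_sum_le_sum_abs _ _) _)
    _ ≤ _ := by
      simp only [abs_mul, abs_of_nonneg (hF0 _), abs_of_nonneg (hstep _)]
      gcongr with i
      all_goals first | exact hae _ | exact hF0 _ | exact hstep i

theorem Int.abs_cast_le_natFloor {z : ℤ} {M : ℝ} (h : |(z : ℝ)| ≤ M) : |(z : ℝ)| ≤ ⌊M⌋₊ := by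
  rw [← Int.cast_abs, ← Int.natCast_natAbs, Int.cast_natCast] at *
  exact_mod_cast Nat.le_floor h

theorem sum_range_ite_lt (m k : ℕ) :
    ∑ i ∈ range k, (if i < m then (1 : ℝ) else 0) = (min k m : ℕ) := by
  rw [sum_boole, show {i ∈ range k | i < m} = range (min k m) by ext; simp, card_range]

theorem abs_sum_range_mul_le_sum_range_of_abs_le_one {a F : ℕ → ℝ} (hF : Antitone F)
    (hF0 : ∀ i, 0 ≤ F i) (ha : ∀ i, |a i| ≤ 1) {m : ℕ} (hm : ∀ k, |∑ i ∈ range k, a i| ≤ m)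
    (n : ℕ) : |∑ i ∈ range n, a i * F i| ≤ ∑ i ∈ range m, F i := by
  have hpartial : ∀ k, |∑ i ∈ range k, a i| ≤ ∑ i ∈ range k, (if i < m then (1 : ℝ) else 0) := by
    intro k
    rw [sum_range_ite_lt, Nat.cast_min]
    refine le_min ?_ (hm k)
    simpa using (abs_sum_le_sum_abs a (range k)).trans (sum_le_sum fun i _ => ha i)
  refine (abs_sum_range_mul_le_of_abs_partialSum_le hF hF0 hpartial n).trans ?_
  simp only [ite_mul, one_mul, zero_mul, ← sum_filter]
  exact sum_le_sum_of_subset_of_nonneg (fun i => by simp) fun i _ _ => hF0 i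

theorem abs_tsum_le_of_forall_abs_sum_range_le {f : ℕ → ℝ} {c : ℝ} (hc : 0 ≤ c)
    (h : ∀ n, |∑ i ∈ range n, f i| ≤ c) : |∑' n, f n| ≤ c := by
  by_cases hs : Summable f
  · exact le_of_tendsto' ((continuous_abs.tendsto _).comp hs.hasSum.tendsto_sum_nat) h
  · rwa [tsum_eq_zero_of_not_summable hs, abs_zero]

theorem stmt_0_general (g : ℕ → ℝ) (hg : ∀ n, g n ∈ ({-1, 0, 1} : Set ℝ))
    (M : ℝ)
    (hpart : ∀ k : ℕ, |∑ n ∈ Finset.range (k + 1), g n| ≤ M)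
    (f : ℝ → ℝ) (hf0 : ∀ x, 0 ≤ f x)
    (hf' : ∀ x, deriv f x < 0) :
    |∑' n : ℕ, g n * f n| ≤ ∑ n ∈ Finset.range (⌊M⌋₊ + 1), f n := by
  simp only [Set.mem_insert_iff, Set.mem_singleton_iff] at hg
  obtain ⟨z, rfl⟩ : ∃ z : ℕ → ℤ, g = fun n => (z n : ℝ) := by
    choose z hz using fun n => show ∃ k : ℤ, g n = k by
      rcases hg n with h | h | h <;> rw [h]
      exacts [⟨-1, by simp⟩, ⟨0, by simp⟩, ⟨1, by simp⟩]
    exact ⟨z, funext hz⟩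
  have hz1 : ∀ i, |(z i : ℝ)| ≤ 1 := fun i => by rcases hg i with h | h | h <;> simp [h]
  have hzM : ∀ k, |∑ i ∈ range k, (z i : ℝ)| ≤ ⌊M⌋₊
    | 0 => by simp
    | k + 1 => by
      have h := hpart k
      simp only [← Int.cast_sum] at h ⊢
      exact Int.abs_cast_le_natFloor h
  have hfnat : Antitone fun n : ℕ => f n :=
    (strictAnti_of_deriv_neg hf').antitone.comp_monotone Nat.mono_cast
  have hbound : ∑ n ∈ range ⌊M⌋₊, f n ≤ ∑ n ∈ range (⌊M⌋₊ + 1), f n :=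
    sum_le_sum_of_subset_of_nonneg (range_subset_range.2 le_self_add) fun i _ _ => hf0 i
  refine abs_tsum_le_of_forall_abs_sum_range_le (sum_nonneg fun i _ => hf0 i) fun n => ?_
  exact (abs_sum_range_mul_le_sum_range_of_abs_le_one hfnat (fun i => hf0 i) hz1 hzM n).trans
    hbound

theorem stmt_0 (g : ℕ → ℝ) (hg : ∀ n, g n ∈ ({-1, 0, 1} : Set ℝ))
    (M : ℝ) (hM : 0 ≤ M)
    (hpart : ∀ k : ℕ, |∑ n ∈ Finset.range (k + 1), g n| ≤ M)
    (f : ℝ → ℝ) (hf0 : ∀ x, 0 ≤ f x)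
    (hfC1 : ContDiff ℝ 1 f)
    (hftend : Tendsto f atTop (nhds 0))
    (hf' : ∀ x, deriv f x < 0)
    (hanti : Antitone fun x => |deriv f x|)
    (hint : IntegrableOn (fun x => |deriv f x|) (Set.Ici (0 : ℝ))) :
    |∑' n : ℕ, g n * f n| ≤ ∑ n ∈ Finset.range (⌊M⌋₊ + 1), f n :=
  stmt_0_general g hg M hpart f hf0 hf'
end

section
/- Let χ be an even Dirichlet character modulo q (i.e., χ(−1) = 1) that is non-principal. Then S(χ) = 2·S₀(χ), where S₀(χ) = sup_N |∑_{n=1}^{N} χ(n)| and S(χ) = sup_{M,N} |∑_{n=M+1}^{M+N} χ(n)|. -/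
/-!
Write `f N = χ 1 + ⋯ + χ N`. An interval sum is a difference `f (M + N) - f M`, so it is at most
`2 S₀`. Conversely, since `χ` is non-principal its sum over a period vanishes, so `f` is
`q`-periodic and `f (k q - 1) = -χ 0 = 0`; evenness then turns the tail
`χ (a + 1) + ⋯ + χ (k q - 1)` of that vanishing sum into `f (k q - 1 - a)`. Hence
`f (k q - 1 - N) = -f N`, and the interval from `N + 1` to `k q - 1 - N` has sum `-2 f N`.
-/

open Finset

namespace ZMod

variable {R : Type*} [AddCommGroup R] {q : ℕ}

def partialSum (g : ZMod q → R) (N : ℕ) : R :=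
  ∑ n ∈ Icc 1 N, g n

variable (g : ZMod q → R)

theorem sum_Icc_eq_partialSum_sub (M N : ℕ) :
    ∑ n ∈ Icc (M + 1) (M + N), g n = partialSum g (M + N) - partialSum g M := by
  have h := Finset.sum_Ioc_consecutive (fun n : ℕ => g n) M.zero_le (M.le_add_right N)
  simp only [← Finset.Icc_add_one_left_eq_Ioc, zero_add] at h
  rw [partialSum, partialSum, ← h, add_sub_cancel_left]

theorem sum_range_natCast [NeZero q] : ∑ n ∈ range q, g n = ∑ x, g x := by
  refine Finset.sum_nbij' (fun n => (n : ZMod q)) ZMod.val (fun _ _ => mem_univ _)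
    (fun x _ => mem_range.2 x.val_lt) (fun n hn => ZMod.val_cast_of_lt (mem_range.1 hn))
    (fun x _ => ZMod.natCast_zmod_val x) (fun _ _ => rfl)

theorem sum_Ioc_add_eq_sum_univ [NeZero q] (N : ℕ) : ∑ n ∈ Ioc N (N + q), g n = ∑ x, g x :=
  calc ∑ n ∈ Ioc N (N + q), g n = ∑ n ∈ range q, g (((N + 1 : ℕ) : ZMod q) + n) := by
        rw [← Finset.Ico_add_one_add_one_eq_Ioc, Finset.sum_Ico_eq_sum_range, Nat.add_right_comm,
          Nat.add_sub_cancel_left]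
        simp only [Nat.cast_add]
    _ = ∑ x, g (((N + 1 : ℕ) : ZMod q) + x) :=
        sum_range_natCast (g <| ((N + 1 : ℕ) : ZMod q) + ·)
    _ = ∑ x, g x := Fintype.sum_equiv (Equiv.addLeft _) _ _ fun _ => rfl

theorem partialSum_periodic [NeZero q] (hg : ∑ x, g x = 0) :
    Function.Periodic (partialSum g) q := fun N => by
  rw [← sub_eq_zero, ← sum_Icc_eq_partialSum_sub, Finset.Icc_add_one_left_eq_Ioc,
    sum_Ioc_add_eq_sum_univ, hg]

-- The reflection `n ↦ a + b + 1 - n ≡ -n` matches `(a, a + b]` with `[1, b]`.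
theorem sum_Icc_add_one_add_eq_partialSum (heven : Function.Even g) {a b : ℕ}
    (h : ((a + b + 1 : ℕ) : ZMod q) = 0) :
    ∑ n ∈ Icc (a + 1) (a + b), g n = partialSum g b := by
  refine Finset.sum_nbij' (fun n => a + b + 1 - n) (fun n => a + b + 1 - n)
    (fun n hn => by simp only [mem_Icc] at hn ⊢; omega)
    (fun n hn => by simp only [mem_Icc] at hn ⊢; omega)
    (fun n hn => by simp only [mem_Icc] at hn; omega)
    (fun n hn => by simp only [mem_Icc] at hn; omega) (fun n hn => ?_)
  simp only [mem_Icc] at hn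
  rw [Nat.cast_sub (by omega), h, zero_sub, heven]

theorem partialSum_add_partialSum_eq_zero [NeZero q] (hg : ∑ x, g x = 0) (hg0 : g 0 = 0)
    (heven : Function.Even g) {a b : ℕ} (h : q ∣ a + b + 1) :
    partialSum g a + partialSum g b = 0 := by
  have hcast : ((a + b + 1 : ℕ) : ZMod q) = 0 := (ZMod.natCast_eq_zero_iff _ _).2 h
  obtain ⟨k, hk⟩ := h
  calc partialSum g a + partialSum g b
      = partialSum g (a + b) := by
        rw [← sum_Icc_add_one_add_eq_partialSum g heven hcast, sum_Icc_eq_partialSum_sub]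
        abel
    _ = partialSum g (a + b + 1) := by
        rw [partialSum, partialSum, Finset.sum_Icc_succ_top (by omega), hcast, hg0, add_zero]
    _ = 0 := by
        rw [hk, ← (partialSum_periodic g hg).map_mod_nat, Nat.mul_mod_right]
        simp [partialSum]

end ZMod

theorem Function.Periodic.bddAbove_range_norm {E : Type*} [Norm E] {f : ℕ → E} {c : ℕ}
    (hf : Function.Periodic f c) (hc : c ≠ 0) : BddAbove (Set.range fun n => ‖f n‖) := by
  have hfin : (Set.range f).Finite :=
    ((Set.finite_Iio c).image f).subset <| Set.forall_mem_range.2 fun n =>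
      ⟨n % c, Nat.mod_lt n (Nat.pos_of_ne_zero hc), hf.map_mod_nat n⟩
  rw [Set.range_comp' (‖·‖) f]
  exact (hfin.image _).bddAbove

theorem iSup_iSup_norm_add_sub_eq_two_mul_iSup_norm {E : Type*} [SeminormedAddCommGroup E]
    [NormedSpace ℝ E] (f : ℕ → E) (hf : BddAbove (Set.range fun n => ‖f n‖))
    (hneg : ∀ N, ∃ L, f (N + L) = -f N) :
    ⨆ M, ⨆ N, ‖f (M + N) - f M‖ = 2 * ⨆ N, ‖f N‖ := by
  have hle : ∀ n, ‖f n‖ ≤ ⨆ N, ‖f N‖ := le_ciSup hf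
  have hsub (M N : ℕ) : ‖f (M + N) - f M‖ ≤ 2 * ⨆ N, ‖f N‖ := by
    linarith [norm_sub_le (f (M + N)) (f M), hle (M + N), hle M]
  have hbdd (M : ℕ) : BddAbove (Set.range fun N => ‖f (M + N) - f M‖) :=
    ⟨_, Set.forall_mem_range.2 (hsub M)⟩
  have hbdd' : BddAbove (Set.range fun M => ⨆ N, ‖f (M + N) - f M‖) :=
    ⟨_, Set.forall_mem_range.2 fun M => ciSup_le (hsub M)⟩
  refine le_antisymm (ciSup_le fun M => ciSup_le (hsub M)) ?_
  rw [Real.mul_iSup_of_nonneg zero_le_two]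
  refine ciSup_le fun N => ?_
  obtain ⟨L, hL⟩ := hneg N
  calc 2 * ‖f N‖ = ‖f (N + L) - f N‖ := by
        rw [hL, ← neg_add', norm_neg, ← two_smul ℝ, norm_smul, Real.norm_two]
    _ ≤ ⨆ L, ‖f (N + L) - f N‖ := le_ciSup (hbdd N) L
    _ ≤ ⨆ M, ⨆ L, ‖f (M + L) - f M‖ := le_ciSup hbdd' N

namespace DirichletCharacter

theorem exists_partialSum_add_eq_neg {q : ℕ} [NeZero q] {χ : DirichletCharacter ℂ q}
    (hχ : χ ≠ 1) (hχeven : χ.Even) (N : ℕ) :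
    ∃ L, ZMod.partialSum χ (N + L) = -ZMod.partialSum χ N := by
  have hq : q ≠ 1 := fun h => hχ (level_one' χ h)
  have h2q : 2 * (N + 1) ≤ q * (N + 1) :=
    Nat.mul_le_mul_right _ (by have := NeZero.ne q; omega)
  refine ⟨q * (N + 1) - 1 - 2 * N, eq_neg_of_add_eq_zero_left ?_⟩
  refine ZMod.partialSum_add_partialSum_eq_zero χ (MulChar.sum_eq_zero_of_ne_one hχ)
    (χ.map_zero' hq) hχeven.to_fun ⟨N + 1, ?_⟩
  omega

end DirichletCharacter

theorem stmt_5 {q : ℕ} [NeZero q] (χ : DirichletCharacter ℂ q) (hχ : χ ≠ 1)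
    (hχeven : χ.Even) :
    (⨆ M : ℕ, ⨆ N : ℕ, ‖∑ n ∈ Finset.Icc (M + 1) (M + N), χ (n : ZMod q)‖) =
      2 * ⨆ N : ℕ, ‖∑ n ∈ Finset.Icc 1 N, χ (n : ZMod q)‖ := by
  simp_rw [ZMod.sum_Icc_eq_partialSum_sub]
  exact iSup_iSup_norm_add_sub_eq_two_mul_iSup_norm _
    ((ZMod.partialSum_periodic χ (MulChar.sum_eq_zero_of_ne_one hχ)).bddAbove_range_norm
      (NeZero.ne q))
    (DirichletCharacter.exists_partialSum_add_eq_neg hχ hχeven)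
end

section
/- Let q ≥ 4·10⁵ be a real number and set S = (√q/π)·(log(π√q + 10.15) + 1.4326). If 1 − 800/(√q (log q)²) ≤ σ < 1, then S^{1−σ} · (1/2)·(log S)² ≤ 0.18 · (log q)². -/
set_option maxHeartbeats 1000000

open Real

-- numeric exponential facts
lemma aux_exp1289 : Real.exp 12.89 ≤ 400000 := by
  have h13 : Real.exp 13 ≤ 444000 := by
    have : Real.exp 13 = (Real.exp 1) ^ (13 : ℕ) := by
      rw [← Real.exp_nat_mul]; norm_num
    rw [this]
    have h := Real.exp_one_lt_d9
    calc (Real.exp 1) ^ (13 : ℕ) ≤ (2.7182818286 : ℝ) ^ (13 : ℕ) := by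
          apply pow_le_pow_left₀ (le_of_lt (Real.exp_pos 1)) h.le
      _ ≤ 444000 := by norm_num
  have h011 : (1.11 : ℝ) ≤ Real.exp 0.11 := by
    have := Real.add_one_le_exp (0.11 : ℝ); linarith
  have hsplit : Real.exp 12.89 * Real.exp 0.11 = Real.exp 13 := by
    rw [← Real.exp_add]; norm_num
  nlinarith [Real.exp_pos (12.89 : ℝ), Real.exp_pos (0.11 : ℝ)]

lemma aux_exp_small_ub {x : ℝ} (h1 : 0 ≤ x) (h2 : x ≤ 1) :
    Real.exp x ≤ 1 + x + x^2/2 + x^3/6 + x^4 * 5 / 96 := by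
  have := Real.exp_bound' h1 h2 (n := 4) (by norm_num)
  have hsum : (∑ m ∈ Finset.range 4, x ^ m / m.factorial) = 1 + x + x^2/2 + x^3/6 := by
    simp [Finset.sum_range_succ, Nat.factorial]
  rw [hsum] at this
  calc Real.exp x ≤ 1 + x + x^2/2 + x^3/6 + x ^ 4 * (4+1) / (Nat.factorial 4 * 4) := this
    _ = 1 + x + x^2/2 + x^3/6 + x^4 * 5 / 96 := by norm_num [Nat.factorial]

lemma aux_exp_small_lb {x : ℝ} (h1 : 0 ≤ x) :
    1 + x + x^2/2 + x^3/6 + x^4/24 ≤ Real.exp x := by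
  have := Real.sum_le_exp_of_nonneg h1 5
  have hsum : (∑ i ∈ Finset.range 5, x ^ i / i.factorial) = 1 + x + x^2/2 + x^3/6 + x^4/24 := by
    simp [Finset.sum_range_succ, Nat.factorial]
  linarith [hsum ▸ this]

lemma aux_exp11445 : Real.exp 1.1445 ≤ 3.141592 := by
  have hs : Real.exp 1.1445 = Real.exp 1 * Real.exp 0.1445 := by
    rw [← Real.exp_add]; norm_num
  have h1 := Real.exp_one_lt_d9
  have h2 := aux_exp_small_ub (x := 0.1445) (by norm_num) (by norm_num)
  rw [hs]
  have hp : (0:ℝ) < Real.exp 0.1445 := Real.exp_pos _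
  nlinarith

lemma aux_exp11448 : (3.141593 : ℝ) ≤ Real.exp 1.1448 := by
  have hs : Real.exp 1.1448 = Real.exp 1 * Real.exp 0.1448 := by
    rw [← Real.exp_add]; norm_num
  have h1 := Real.exp_one_gt_d9
  have h2 := aux_exp_small_lb (x := 0.1448) (by norm_num)
  rw [hs]
  nlinarith [Real.exp_pos (1:ℝ)]

lemma aux_exp22012 : (9.0322 : ℝ) ≤ Real.exp 2.2012 := by
  have hs : Real.exp 2.2012 = Real.exp 1 * Real.exp 1 * Real.exp 0.2012 := by
    rw [← Real.exp_add, ← Real.exp_add]; norm_num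
  have h1 := Real.exp_one_gt_d9
  have h2 := aux_exp_small_lb (x := 0.2012) (by norm_num)
  rw [hs]
  nlinarith [Real.exp_pos (1:ℝ)]

theorem stmt_9 (q σ S : ℝ) (hq : 4 * 10 ^ 5 ≤ q)
    (hS : S = Real.sqrt q / Real.pi * (Real.log (Real.pi * Real.sqrt q + 10.15) + 1.4326))
    (hσl : 1 - 800 / (Real.sqrt q * (Real.log q) ^ 2) ≤ σ) (hσu : σ < 1) :
    S ^ (1 - σ) * (1 / 2 * (Real.log S) ^ 2) ≤ 0.18 * (Real.log q) ^ 2 := by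
  have hq0 : (0:ℝ) < q := by linarith
  set r := Real.sqrt q with hr_def
  set L := Real.log q with hL_def
  have hr : (632.45 : ℝ) ≤ r := by
    rw [hr_def]
    rw [show (632.45:ℝ) = Real.sqrt (632.45^2) from (Real.sqrt_sq (by norm_num)).symm]
    apply Real.sqrt_le_sqrt; nlinarith
  have hr0 : (0:ℝ) < r := by linarith
  have hL : (12.89 : ℝ) ≤ L := by
    rw [hL_def, Real.le_log_iff_exp_le hq0]
    calc Real.exp 12.89 ≤ 400000 := aux_exp1289
      _ ≤ q := by linarith
  have hL0 : (0:ℝ) < L := by linarith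
  have hpi_lb : (3.141592 : ℝ) < Real.pi := Real.pi_gt_d6
  have hpi_ub : Real.pi < 3.141593 := Real.pi_lt_d6
  have hpi0 : (0:ℝ) < Real.pi := Real.pi_pos
  -- log π bounds
  have hlogpi_lb : (1.1445 : ℝ) ≤ Real.log Real.pi := by
    rw [Real.le_log_iff_exp_le hpi0]
    linarith [aux_exp11445]
  have hlogpi_ub : Real.log Real.pi ≤ 1.1448 := by
    rw [Real.log_le_iff_le_exp hpi0]
    linarith [aux_exp11448]
  -- inner term I
  set I := Real.log (Real.pi * r + 10.15) + 1.4326 with hI_def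
  have harg1 : (1:ℝ) ≤ Real.pi * r + 10.15 := by nlinarith
  have hlogarg0 : 0 ≤ Real.log (Real.pi * r + 10.15) := Real.log_nonneg harg1
  have hI0 : (0:ℝ) < I := by rw [hI_def]; linarith
  -- upper bound on log(π r + 10.15)
  have harg_ub : Real.pi * r + 10.15 ≤ Real.pi * r * 1.0052 := by
    have hpr : (3.141592:ℝ) * 632.45 ≤ Real.pi * r :=
      mul_le_mul hpi_lb.le hr (by norm_num) hpi0.le
    nlinarith
  have hlogarg_ub : Real.log (Real.pi * r + 10.15) ≤ Real.log Real.pi + L/2 + 0.0052 := by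
    have h1 : Real.log (Real.pi * r + 10.15) ≤ Real.log (Real.pi * r * 1.0052) :=
      Real.log_le_log (by linarith) harg_ub
    have h2 : Real.log (Real.pi * r * 1.0052) =
        Real.log Real.pi + Real.log r + Real.log 1.0052 := by
      rw [Real.log_mul (by positivity) (by norm_num), Real.log_mul (by positivity) (by positivity)]
    have h3 : Real.log r = L / 2 := by
      rw [hr_def, hL_def, Real.log_sqrt hq0.le]
    have h4 : Real.log (1.0052 : ℝ) ≤ 0.0052 := by
      have := Real.log_le_sub_one_of_pos (show (0:ℝ) < 1.0052 by norm_num); linarith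
    rw [h2, h3] at h1; linarith
  have hI_ub : I ≤ L/2 + 2.5826 := by
    rw [hI_def]; linarith
  -- log I bound via concavity at 9.0322
  have hlogI : Real.log I ≤ (L/2 + 2.5826)/9.0322 - 1 + 2.2012 := by
    have h1 : Real.log I ≤ Real.log (L/2 + 2.5826) := Real.log_le_log hI0 hI_ub
    have hM0 : (0:ℝ) < L/2 + 2.5826 := by linarith
    have h2 : Real.log ((L/2 + 2.5826)/9.0322) =
        Real.log (L/2 + 2.5826) - Real.log 9.0322 :=
      Real.log_div (ne_of_gt hM0) (by norm_num)
    have h3 : Real.log ((L/2 + 2.5826)/9.0322) ≤ (L/2 + 2.5826)/9.0322 - 1 :=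
      Real.log_le_sub_one_of_pos (by positivity)
    have h4 : Real.log (9.0322:ℝ) ≤ 2.2012 := by
      rw [Real.log_le_iff_le_exp (by norm_num)]; exact aux_exp22012
    linarith
  -- log S
  have hB_eq : Real.log S = L/2 - Real.log Real.pi + Real.log I := by
    rw [hS]
    rw [Real.log_mul (by positivity) (ne_of_gt hI0), Real.log_div (ne_of_gt hr0) (ne_of_gt hpi0)]
    have h3 : Real.log r = L / 2 := by
      rw [hr_def, hL_def, Real.log_sqrt hq0.le]
    rw [h3]
  set B := Real.log S with hB_def
  have hB0 : 0 ≤ B := by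
    rw [hB_def, hS]
    apply Real.log_nonneg
    have : (1.4326:ℝ) ≤ I := by rw [hI_def]; linarith
    have hrp : (201:ℝ) ≤ r / Real.pi := by
      rw [le_div_iff₀ hpi0]; nlinarith [hr, hpi_ub]
    calc (1:ℝ) ≤ 201 * 1.4326 := by norm_num
      _ ≤ (r / Real.pi) * I := by
          apply mul_le_mul hrp this (by norm_num) (by linarith)
  -- key bound: B ≤ 0.6 L - 144 / r
  have hstar : B ≤ 0.6 * L - 144 / r := by
    have h144 : 144 / r ≤ 0.2277 := by
      rw [div_le_iff₀ hr0]; linarith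
    have hdiv : (L/2 + 2.5826)/9.0322 ≤ 0.0554 * L + 0.28594 := by
      rw [div_le_iff₀ (show (0:ℝ) < 9.0322 by norm_num)]; nlinarith
    have hB_ub : B ≤ L/2 - 1.1445 + ((L/2 + 2.5826)/9.0322 - 1 + 2.2012) := by
      rw [hB_eq]; linarith
    linarith
  -- δ and ε
  set δ := 1 - σ with hδ_def
  have hδ0 : 0 < δ := by rw [hδ_def]; linarith
  have hδub : δ ≤ 800 / (r * L^2) := by rw [hδ_def]; linarith
  set ε := 480 / (r * L) with hε_def
  have hε0 : 0 < ε := by positivity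
  have hεub : ε ≤ 0.0589 := by
    rw [hε_def, div_le_iff₀ (by positivity)]
    have hrL : (632.45:ℝ) * 12.89 ≤ r * L := mul_le_mul hr hL (by norm_num) hr0.le
    linarith
  -- S^δ ≤ exp ε
  have hS0 : (0:ℝ) < S := by
    rw [hS]; exact mul_pos (div_pos hr0 hpi0) hI0
  have hδB : δ * B ≤ ε := by
    have h1 : δ * B ≤ (800 / (r * L^2)) * B :=
      mul_le_mul_of_nonneg_right hδub hB0
    have h2 : (800 / (r * L^2)) * B ≤ (800 / (r * L^2)) * (0.6 * L) := by
      apply mul_le_mul_of_nonneg_left _ (by positivity)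
      have : (0:ℝ) < 144 / r := by positivity
      linarith
    have h3 : (800 / (r * L^2)) * (0.6 * L) = ε := by
      rw [hε_def]; field_simp; ring
    exact le_of_le_of_eq (h1.trans h2) h3
  have hSpow : S ^ δ ≤ Real.exp ε := by
    rw [Real.rpow_def_of_pos hS0]
    exact Real.exp_le_exp.mpr (by rw [mul_comm]; exact hδB)
  -- exp ε * (1 - ε/2)^2 ≤ 1
  have hkey : Real.exp ε * (1 - ε/2)^2 ≤ 1 := by
    have h1 : 1 - ε/2 ≤ Real.exp (-(ε/2)) := by
      have := Real.add_one_le_exp (-(ε/2)); linarith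
    have h2 : 0 ≤ 1 - ε/2 := by linarith
    have h3 : (1 - ε/2)^2 ≤ Real.exp (-(ε/2))^2 := by
      apply pow_le_pow_left₀ h2 h1
    have h4 : Real.exp ε * Real.exp (-(ε/2))^2 = 1 := by
      rw [← Real.exp_nat_mul, ← Real.exp_add,
        show ε + (2:ℕ) * -(ε/2) = 0 by push_cast; ring, Real.exp_zero]
    have h5 : Real.exp ε * (1 - ε/2)^2 ≤ Real.exp ε * Real.exp (-(ε/2))^2 :=
      mul_le_mul_of_nonneg_left h3 (Real.exp_pos ε).le
    linarith
  -- final assembly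
  have hT : B ≤ 0.6 * L * (1 - ε/2) := by
    have heq : 0.6 * L * (1 - ε/2) = 0.6 * L - 144 / r := by
      rw [hε_def]; field_simp; ring
    linarith [hstar, heq]
  have hT0 : 0 ≤ 0.6 * L * (1 - ε/2) :=
    mul_nonneg (by linarith) (by linarith)
  have hB2 : B^2 ≤ (0.6 * L * (1 - ε/2))^2 := pow_le_pow_left₀ hB0 hT 2
  have hfinal : S ^ δ * (1/2 * B^2) ≤ Real.exp ε * (1/2 * (0.6 * L * (1 - ε/2))^2) := by
    apply mul_le_mul hSpow (by linarith) (by positivity) (Real.exp_pos ε).le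
  calc S ^ (1 - σ) * (1/2 * B^2) = S ^ δ * (1/2 * B^2) := by rw [hδ_def]
    _ ≤ Real.exp ε * (1/2 * (0.6 * L * (1 - ε/2))^2) := hfinal
    _ = (Real.exp ε * (1 - ε/2)^2) * (0.18 * L^2) := by ring
    _ ≤ 1 * (0.18 * L^2) := by
        apply mul_le_mul_of_nonneg_right hkey (by positivity)
    _ = 0.18 * L^2 := by ring
end

section
/- Let q ≥ 4·10⁵ be a real number and set S = (2/π²)·√q·(log((π²/4)√q + 10.15) + 1.4326). If 1 − 515/(√q (log q)²) ≤ σ < 1, then S^{1−σ} · (1/2)·(log S)² ≤ 0.1536 · (log q)². -/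
set_option maxHeartbeats 1000000

open Real

lemma log_one_sub_le {x : ℝ} (h : |x| < 1) (n : ℕ) :
    Real.log (1 - x) ≤ -(∑ i ∈ Finset.range n, x ^ (i + 1) / (i + 1)) + |x| ^ (n + 1) / (1 - |x|) := by
  have := Real.abs_log_sub_add_sum_range_le h n
  rw [abs_le] at this
  linarith [this.1, this.2]

lemma log_one_sub_ge {x : ℝ} (h : |x| < 1) (n : ℕ) :
    -(∑ i ∈ Finset.range n, x ^ (i + 1) / (i + 1)) - |x| ^ (n + 1) / (1 - |x|) ≤ Real.log (1 - x) := by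
  have := Real.abs_log_sub_add_sum_range_le h n
  rw [abs_le] at this
  linarith [this.1, this.2]

lemma expcube {A : ℝ} (h0 : 0 ≤ A) (h1 : A ≤ 1) :
    Real.exp A ≤ 1 + A + A^2/2 + (2/9) * A^3 := by
  have hb := Real.exp_bound (x := A) (by rw [abs_of_nonneg h0]; exact h1) (by norm_num : 0 < 3)
  rw [abs_of_nonneg h0] at hb
  simp only [Finset.sum_range_succ, Finset.sum_range_zero] at hb
  rw [abs_le] at hb
  norm_num [Nat.factorial] at hb
  nlinarith [hb.1, hb.2]

lemma l632 : (6.4496:ℝ) ≤ Real.log (632.455:ℝ) := by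
  have h2l : (0.6931471803:ℝ) < Real.log 2 := Real.log_two_gt_d9
  have hx : |(-(0.235263671875):ℝ)| < 1 := by rw [abs_of_nonpos (by norm_num : (-(0.235263671875):ℝ) ≤ (0:ℝ))]; norm_num
  have hs := log_one_sub_ge hx 16
  rw [abs_of_nonpos (by norm_num : (-(0.235263671875):ℝ) ≤ (0:ℝ))] at hs
  have hclean : (0.211284446757:ℝ) ≤ Real.log (1 - (-(0.235263671875):ℝ)) := by
    refine le_trans ?_ hs
    simp only [Finset.sum_range_succ, Finset.sum_range_zero]
    norm_num
  rw [(by norm_num : (632.455:ℝ) = 2^(9:ℕ) * (1 - (-(0.235263671875):ℝ))), Real.log_mul (by norm_num) (by norm_num), Real.log_pow]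
  push_cast
  linarith [hclean, h2l]

lemma lpi : (1.1447236:ℝ) ≤ Real.log (3.141592:ℝ) := by
  have h2l : (0.6931471803:ℝ) < Real.log 2 := Real.log_two_gt_d9
  have hx : |(0.214602:ℝ)| < 1 := by rw [abs_of_nonneg (by norm_num : (0:ℝ) ≤ (0.214602:ℝ))]; norm_num
  have hs := log_one_sub_ge hx 16
  rw [abs_of_nonneg (by norm_num : (0:ℝ) ≤ (0.214602:ℝ))] at hs
  have hclean : (-(0.24156468332):ℝ) ≤ Real.log (1 - (0.214602:ℝ)) := by
    refine le_trans ?_ hs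
    simp only [Finset.sum_range_succ, Finset.sum_range_zero]
    norm_num
  rw [(by norm_num : (3.141592:ℝ) = 2^(2:ℕ) * (1 - (0.214602:ℝ))), Real.log_mul (by norm_num) (by norm_num), Real.log_pow]
  push_cast
  linarith [hclean, h2l]

lemma l2483 : Real.log (2.4835:ℝ) ≤ (0.9097:ℝ) := by
  have h2u : Real.log 2 < 0.6931471808 := Real.log_two_lt_d9
  have hx : |(-(0.24175):ℝ)| < 1 := by rw [abs_of_nonpos (by norm_num : (-(0.24175):ℝ) ≤ (0:ℝ))]; norm_num
  have hs := log_one_sub_le hx 16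
  rw [abs_of_nonpos (by norm_num : (-(0.24175):ℝ) ≤ (0:ℝ))] at hs
  have hclean : Real.log (1 - (-(0.24175):ℝ)) ≤ (0.216521675048:ℝ) := by
    refine le_trans hs ?_
    simp only [Finset.sum_range_succ, Finset.sum_range_zero]
    norm_num
  rw [(by norm_num : (2.4835:ℝ) = 2^(1:ℕ) * (1 - (-(0.24175):ℝ))), Real.log_mul (by norm_num) (by norm_num), Real.log_pow]
  push_cast
  linarith [hclean, h2u]

lemma ls1 : Real.log (8.7944:ℝ) ≤ (2.174116:ℝ) := by
  have h2u : Real.log 2 < 0.6931471808 := Real.log_two_lt_d9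
  have hx : |(-(0.0993):ℝ)| < 1 := by rw [abs_of_nonpos (by norm_num : (-(0.0993):ℝ) ≤ (0:ℝ))]; norm_num
  have hs := log_one_sub_le hx 16
  rw [abs_of_nonpos (by norm_num : (-(0.0993):ℝ) ≤ (0:ℝ))] at hs
  have hclean : Real.log (1 - (-(0.0993):ℝ)) ≤ (0.094673613603:ℝ) := by
    refine le_trans hs ?_
    simp only [Finset.sum_range_succ, Finset.sum_range_zero]
    norm_num
  rw [(by norm_num : (8.7944:ℝ) = 2^(3:ℕ) * (1 - (-(0.0993):ℝ))), Real.log_mul (by norm_num) (by norm_num), Real.log_pow]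
  push_cast
  linarith [hclean, h2u]

lemma ls2 : Real.log (8.8069:ℝ) ≤ (2.175536:ℝ) := by
  have h2u : Real.log 2 < 0.6931471808 := Real.log_two_lt_d9
  have hx : |(-(0.1008625):ℝ)| < 1 := by rw [abs_of_nonpos (by norm_num : (-(0.1008625):ℝ) ≤ (0:ℝ))]; norm_num
  have hs := log_one_sub_le hx 16
  rw [abs_of_nonpos (by norm_num : (-(0.1008625):ℝ) ≤ (0:ℝ))] at hs
  have hclean : Real.log (1 - (-(0.1008625):ℝ)) ≤ (0.096093963475:ℝ) := by
    refine le_trans hs ?_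
    simp only [Finset.sum_range_succ, Finset.sum_range_zero]
    norm_num
  rw [(by norm_num : (8.8069:ℝ) = 2^(3:ℕ) * (1 - (-(0.1008625):ℝ))), Real.log_mul (by norm_num) (by norm_num), Real.log_pow]
  push_cast
  linarith [hclean, h2u]

lemma lX2 : Real.log (635.619:ℝ) ≤ (6.4546:ℝ) := by
  have h2u : Real.log 2 < 0.6931471808 := Real.log_two_lt_d9
  have hx : |(-(0.241443359375):ℝ)| < 1 := by rw [abs_of_nonpos (by norm_num : (-(0.241443359375):ℝ) ≤ (0:ℝ))]; norm_num
  have hs := log_one_sub_le hx 16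
  rw [abs_of_nonpos (by norm_num : (-(0.241443359375):ℝ) ≤ (0:ℝ))] at hs
  have hclean : Real.log (1 - (-(0.241443359375):ℝ)) ≤ (0.216274702232:ℝ) := by
    refine le_trans hs ?_
    simp only [Finset.sum_range_succ, Finset.sum_range_zero]
    norm_num
  rw [(by norm_num : (635.619:ℝ) = 2^(9:ℕ) * (1 - (-(0.241443359375):ℝ))), Real.log_mul (by norm_num) (by norm_num), Real.log_pow]
  push_cast
  linarith [hclean, h2u]

lemma ls3 : Real.log (8.8419:ℝ) ≤ (2.179502:ℝ) := by
  have h2u : Real.log 2 < 0.6931471808 := Real.log_two_lt_d9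
  have hx : |(-(0.1052375):ℝ)| < 1 := by rw [abs_of_nonpos (by norm_num : (-(0.1052375):ℝ) ≤ (0:ℝ))]; norm_num
  have hs := log_one_sub_le hx 16
  rw [abs_of_nonpos (by norm_num : (-(0.1052375):ℝ) ≤ (0:ℝ))] at hs
  have hclean : Real.log (1 - (-(0.1052375):ℝ)) ≤ (0.100060244002:ℝ) := by
    refine le_trans hs ?_
    simp only [Finset.sum_range_succ, Finset.sum_range_zero]
    norm_num
  rw [(by norm_num : (8.8419:ℝ) = 2^(3:ℕ) * (1 - (-(0.1052375):ℝ))), Real.log_mul (by norm_num) (by norm_num), Real.log_pow]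
  push_cast
  linarith [hclean, h2u]

lemma lX3 : Real.log (648.459:ℝ) ≤ (6.4746:ℝ) := by
  have h2u : Real.log 2 < 0.6931471808 := Real.log_two_lt_d9
  have hx : |(-(0.266521484375):ℝ)| < 1 := by rw [abs_of_nonpos (by norm_num : (-(0.266521484375):ℝ) ≤ (0:ℝ))]; norm_num
  have hs := log_one_sub_le hx 16
  rw [abs_of_nonpos (by norm_num : (-(0.266521484375):ℝ) ≤ (0:ℝ))] at hs
  have hclean : Real.log (1 - (-(0.266521484375):ℝ)) ≤ (0.236274154124:ℝ) := by
    refine le_trans hs ?_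
    simp only [Finset.sum_range_succ, Finset.sum_range_zero]
    norm_num
  rw [(by norm_num : (648.459:ℝ) = 2^(9:ℕ) * (1 - (-(0.266521484375):ℝ))), Real.log_mul (by norm_num) (by norm_num), Real.log_pow]
  push_cast
  linarith [hclean, h2u]

lemma ls4 : Real.log (8.9669:ℝ) ≤ (2.193541:ℝ) := by
  have h2u : Real.log 2 < 0.6931471808 := Real.log_two_lt_d9
  have hx : |(-(0.1208625):ℝ)| < 1 := by rw [abs_of_nonpos (by norm_num : (-(0.1208625):ℝ) ≤ (0:ℝ))]; norm_num
  have hs := log_one_sub_le hx 16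
  rw [abs_of_nonpos (by norm_num : (-(0.1208625):ℝ) ≤ (0:ℝ))] at hs
  have hclean : Real.log (1 - (-(0.1208625):ℝ)) ≤ (0.114098478227:ℝ) := by
    refine le_trans hs ?_
    simp only [Finset.sum_range_succ, Finset.sum_range_zero]
    norm_num
  rw [(by norm_num : (8.9669:ℝ) = 2^(3:ℕ) * (1 - (-(0.1208625):ℝ))), Real.log_mul (by norm_num) (by norm_num), Real.log_pow]
  push_cast
  linarith [hclean, h2u]

lemma lX4 : Real.log (681.706:ℝ) ≤ (6.5246:ℝ) := by
  have h2u : Real.log 2 < 0.6931471808 := Real.log_two_lt_d9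
  have hx : |(-(0.33145703125):ℝ)| < 1 := by rw [abs_of_nonpos (by norm_num : (-(0.33145703125):ℝ) ≤ (0:ℝ))]; norm_num
  have hs := log_one_sub_le hx 16
  rw [abs_of_nonpos (by norm_num : (-(0.33145703125):ℝ) ≤ (0:ℝ))] at hs
  have hclean : Real.log (1 - (-(0.33145703125):ℝ)) ≤ (0.286273865024:ℝ) := by
    refine le_trans hs ?_
    simp only [Finset.sum_range_succ, Finset.sum_range_zero]
    norm_num
  rw [(by norm_num : (681.706:ℝ) = 2^(9:ℕ) * (1 - (-(0.33145703125):ℝ))), Real.log_mul (by norm_num) (by norm_num), Real.log_pow]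
  push_cast
  linarith [hclean, h2u]

lemma ls5 : Real.log (9.4669:ℝ) ≤ (2.247802:ℝ) := by
  have h2u : Real.log 2 < 0.6931471808 := Real.log_two_lt_d9
  have hx : |(-(0.1833625):ℝ)| < 1 := by rw [abs_of_nonpos (by norm_num : (-(0.1833625):ℝ) ≤ (0:ℝ))]; norm_num
  have hs := log_one_sub_le hx 16
  rw [abs_of_nonpos (by norm_num : (-(0.1833625):ℝ) ≤ (0:ℝ))] at hs
  have hclean : Real.log (1 - (-(0.1833625):ℝ)) ≤ (0.168359962404:ℝ) := by
    refine le_trans hs ?_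
    simp only [Finset.sum_range_succ, Finset.sum_range_zero]
    norm_num
  rw [(by norm_num : (9.4669:ℝ) = 2^(3:ℕ) * (1 - (-(0.1833625):ℝ))), Real.log_mul (by norm_num) (by norm_num), Real.log_pow]
  push_cast
  linarith [hclean, h2u]

lemma lX5 : Real.log (832.638:ℝ) ≤ (6.7246:ℝ) := by
  have h2u : Real.log 2 < 0.6931471808 := Real.log_two_lt_d9
  have hx : |(0.186876953125:ℝ)| < 1 := by rw [abs_of_nonneg (by norm_num : (0:ℝ) ≤ (0.186876953125:ℝ))]; norm_num
  have hs := log_one_sub_le hx 16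
  rw [abs_of_nonneg (by norm_num : (0:ℝ) ≤ (0.186876953125:ℝ))] at hs
  have hclean : Real.log (1 - (0.186876953125:ℝ)) ≤ (-(0.206872831716):ℝ) := by
    refine le_trans hs ?_
    simp only [Finset.sum_range_succ, Finset.sum_range_zero]
    norm_num
  rw [(by norm_num : (832.638:ℝ) = 2^(10:ℕ) * (1 - (0.186876953125:ℝ))), Real.log_mul (by norm_num) (by norm_num), Real.log_pow]
  push_cast
  linarith [hclean, h2u]

lemma ls6 : Real.log (11.1169:ℝ) ≤ (2.408467:ℝ) := by
  have h2u : Real.log 2 < 0.6931471808 := Real.log_two_lt_d9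
  have hx : |(0.30519375:ℝ)| < 1 := by rw [abs_of_nonneg (by norm_num : (0:ℝ) ≤ (0.30519375:ℝ))]; norm_num
  have hs := log_one_sub_le hx 16
  rw [abs_of_nonneg (by norm_num : (0:ℝ) ≤ (0.30519375:ℝ))] at hs
  have hclean : Real.log (1 - (0.30519375:ℝ)) ≤ (-(0.364122246629):ℝ) := by
    refine le_trans hs ?_
    simp only [Finset.sum_range_succ, Finset.sum_range_zero]
    norm_num
  rw [(by norm_num : (11.1169:ℝ) = 2^(4:ℕ) * (1 - (0.30519375:ℝ))), Real.log_mul (by norm_num) (by norm_num), Real.log_pow]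
  push_cast
  linarith [hclean, h2u]

lemma lX6 : Real.log (1853.071:ℝ) ≤ (7.5246:ℝ) := by
  have h2u : Real.log 2 < 0.6931471808 := Real.log_two_lt_d9
  have hx : |(0.09518017578125:ℝ)| < 1 := by rw [abs_of_nonneg (by norm_num : (0:ℝ) ≤ (0.09518017578125:ℝ))]; norm_num
  have hs := log_one_sub_le hx 16
  rw [abs_of_nonneg (by norm_num : (0:ℝ) ≤ (0.09518017578125:ℝ))] at hs
  have hclean : Real.log (1 - (0.09518017578125:ℝ)) ≤ (-(0.100019444364):ℝ) := by
    refine le_trans hs ?_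
    simp only [Finset.sum_range_succ, Finset.sum_range_zero]
    norm_num
  rw [(by norm_num : (1853.071:ℝ) = 2^(11:ℕ) * (1 - (0.09518017578125:ℝ))), Real.log_mul (by norm_num) (by norm_num), Real.log_pow]
  push_cast
  linarith [hclean, h2u]

lemma ls7 : Real.log (13.3546:ℝ) ≤ (2.591862:ℝ) := by
  have h2u : Real.log 2 < 0.6931471808 := Real.log_two_lt_d9
  have hx : |(0.1653375:ℝ)| < 1 := by rw [abs_of_nonneg (by norm_num : (0:ℝ) ≤ (0.1653375:ℝ))]; norm_num
  have hs := log_one_sub_le hx 16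
  rw [abs_of_nonneg (by norm_num : (0:ℝ) ≤ (0.1653375:ℝ))] at hs
  have hclean : Real.log (1 - (0.1653375:ℝ)) ≤ (-(0.180727827455):ℝ) := by
    refine le_trans hs ?_
    simp only [Finset.sum_range_succ, Finset.sum_range_zero]
    norm_num
  rw [(by norm_num : (13.3546:ℝ) = 2^(4:ℕ) * (1 - (0.1653375:ℝ))), Real.log_mul (by norm_num) (by norm_num), Real.log_pow]
  push_cast
  linarith [hclean, h2u]

lemma lX7 : Real.log (22575.029:ℝ) ≤ (10.0246:ℝ) := by
  have h2u : Real.log 2 < 0.6931471808 := Real.log_two_lt_d9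
  have hx : |(0.311064788818359375:ℝ)| < 1 := by rw [abs_of_nonneg (by norm_num : (0:ℝ) ≤ (0.311064788818359375:ℝ))]; norm_num
  have hs := log_one_sub_le hx 16
  rw [abs_of_nonneg (by norm_num : (0:ℝ) ≤ (0.311064788818359375:ℝ))] at hs
  have hclean : Real.log (1 - (0.311064788818359375:ℝ)) ≤ (-(0.372608041839):ℝ) := by
    refine le_trans hs ?_
    simp only [Finset.sum_range_succ, Finset.sum_range_zero]
    norm_num
  rw [(by norm_num : (22575.029:ℝ) = 2^(15:ℕ) * (1 - (0.311064788818359375:ℝ))), Real.log_mul (by norm_num) (by norm_num), Real.log_pow]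
  push_cast
  linarith [hclean, h2u]

lemma lst : Real.log (14.35:ℝ) ≤ (2.663751:ℝ) := by
  have h2u : Real.log 2 < 0.6931471808 := Real.log_two_lt_d9
  have hx : |(0.103125:ℝ)| < 1 := by rw [abs_of_nonneg (by norm_num : (0:ℝ) ≤ (0.103125:ℝ))]; norm_num
  have hs := log_one_sub_le hx 16
  rw [abs_of_nonneg (by norm_num : (0:ℝ) ≤ (0.103125:ℝ))] at hs
  have hclean : Real.log (1 - (0.103125:ℝ)) ≤ (-(0.108838780034):ℝ) := by
    refine le_trans hs ?_
    simp only [Finset.sum_range_succ, Finset.sum_range_zero]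
    norm_num
  rw [(by norm_num : (14.35:ℝ) = 2^(4:ℕ) * (1 - (0.103125:ℝ))), Real.log_mul (by norm_num) (by norm_num), Real.log_pow]
  push_cast
  linarith [hclean, h2u]

lemma lXt : Real.log (162753:ℝ) ≤ (12:ℝ) := by
  have h2u : Real.log 2 < 0.6931471808 := Real.log_two_lt_d9
  have hx : |(-(0.24170684814453125):ℝ)| < 1 := by rw [abs_of_nonpos (by norm_num : (-(0.24170684814453125):ℝ) ≤ (0:ℝ))]; norm_num
  have hs := log_one_sub_le hx 16
  rw [abs_of_nonpos (by norm_num : (-(0.24170684814453125):ℝ) ≤ (0:ℝ))] at hs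
  have hclean : Real.log (1 - (-(0.24170684814453125):ℝ)) ≤ (0.216486923604:ℝ) := by
    refine le_trans hs ?_
    simp only [Finset.sum_range_succ, Finset.sum_range_zero]
    norm_num
  rw [(by norm_num : (162753:ℝ) = 2^(17:ℕ) * (1 - (-(0.24170684814453125):ℝ))), Real.log_mul (by norm_num) (by norm_num), Real.log_pow]
  push_cast
  linarith [hclean, h2u]

lemma step (t L x s U X τ1 τ2 Ψ β α : ℝ)
    (hβ : β = 1 + 1/s) (hα : α = U - 1.5963 + (2.3423 - s)/s)
    (hs0 : 0 < s) (hU : Real.log s ≤ U)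
    (hL0 : 0 ≤ L) (hLub : L ≤ t - 1.5963 + Real.log (t + 2.3423))
    (ht1 : τ1 ≤ t) (ht2 : t ≤ τ2) (ht10 : 0 < τ1)
    (hX0 : 0 < X) (hxX : X ≤ x)
    (hAb1 : 515 * (β*τ2+α) / (4*X*τ1^2) ≤ 1)
    (hΨ : 1 + (515 * (β*τ2+α) / (4*X*τ1^2)) + (515 * (β*τ2+α) / (4*X*τ1^2))^2/2
          + (2/9)*(515 * (β*τ2+α) / (4*X*τ1^2))^3 ≤ Ψ)
    (hquad : ∀ u, τ1 ≤ u → u ≤ τ2 → Ψ * (β*u+α)^2 ≤ 1.2288 * u^2) :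
    Real.exp (515 * L / (x * (2*t)^2)) * (L^2/2) ≤ 0.6144 * t^2 := by
  set Ab := 515 * (β*τ2+α) / (4*X*τ1^2) with hAbdef
  have hx0 : 0 < x := lt_of_lt_of_le hX0 hxX
  have ht0 : 0 < t := lt_of_lt_of_le ht10 ht1
  have htD : (0:ℝ) < t + 2.3423 := by linarith
  have hLβ : L ≤ β*t + α := by
    have hdiv : 0 < (t + 2.3423)/s := div_pos htD hs0
    have h1 := Real.log_le_sub_one_of_pos hdiv
    rw [Real.log_div (ne_of_gt htD) (ne_of_gt hs0)] at h1
    have hid : t - 1.5963 + (U + ((t+2.3423)/s - 1)) = β*t + α := by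
      rw [hβ, hα]; field_simp; ring
    nlinarith [hLub, hU, h1]
  have hβt0 : 0 ≤ β*t+α := le_trans hL0 hLβ
  have hβ0 : 0 < β := by rw [hβ]; positivity
  have hβτ2 : β*t+α ≤ β*τ2+α := by nlinarith
  have hβτ20 : 0 ≤ β*τ2+α := le_trans hβt0 hβτ2
  set A := 515 * L / (x * (2*t)^2) with hAdef
  have hA0 : 0 ≤ A := by positivity
  have hA : A ≤ Ab := by
    rw [hAdef, hAbdef]
    have htsq : τ1^2 ≤ t^2 := pow_le_pow_left₀ (le_of_lt ht10) ht1 2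
    have hden : 4*X*τ1^2 ≤ x * (2*t)^2 := by nlinarith
    exact div_le_div₀ (by positivity) (by nlinarith) (by positivity) hden
  have hA1 : A ≤ 1 := le_trans hA hAb1
  have hAb0 : 0 ≤ Ab := le_trans hA0 hA
  have hexp : Real.exp A ≤ 1 + A + A^2/2 + (2/9)*A^3 := expcube hA0 hA1
  have hmono : 1 + A + A^2/2 + (2/9)*A^3 ≤ Ψ := by
    have h2 := pow_le_pow_left₀ hA0 hA 2
    have h3 := pow_le_pow_left₀ hA0 hA 3
    linarith
  have hΨ0 : (0:ℝ) ≤ Ψ := by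
    have h2 := pow_nonneg hAb0 2
    have h3 := pow_nonneg hAb0 3
    linarith
  have hq := hquad t ht1 ht2
  have hL2 : L^2 ≤ (β*t+α)^2 := pow_le_pow_left₀ hL0 hLβ 2
  have hexpΨ : Real.exp A ≤ Ψ := le_trans hexp hmono
  calc Real.exp A * (L^2/2) ≤ Ψ * (L^2/2) :=
        mul_le_mul_of_nonneg_right hexpΨ (by positivity)
    _ ≤ Ψ * ((β*t+α)^2/2) := mul_le_mul_of_nonneg_left (by linarith) hΨ0
    _ ≤ 0.6144 * t^2 := by linarith

lemma tail_step (t L x : ℝ) (ht : (12:ℝ) ≤ t) (hxt : Real.log x = t) (hx0 : 0 < x)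
    (hL0 : 0 ≤ L) (hLub : L ≤ t - 1.5963 + Real.log (t + 2.3423)) :
    Real.exp (515 * L / (x * (2*t)^2)) * (L^2/2) ≤ 0.6144 * t^2 := by
  have hU := lst
  have htD : (0:ℝ) < t + 2.3423 := by linarith
  have hLβ : L ≤ (307/287:ℝ)*t + (66204437/287000000:ℝ) := by
    have hdiv : 0 < (t + 2.3423)/(14.35:ℝ) := div_pos htD (by norm_num)
    have h1 := Real.log_le_sub_one_of_pos hdiv
    rw [Real.log_div (ne_of_gt htD) (by norm_num)] at h1
    have e : (t + 2.3423) / 14.35 - 1 = 20/287*t - 240154/287000 := by ring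
    rw [e] at h1
    linarith [hLub, hU, h1]
  have hβt0 : 0 ≤ (307/287:ℝ)*t + (66204437/287000000:ℝ) := le_trans hL0 hLβ
  have ht0 : (0:ℝ) < t := by linarith
  have hw0 : (0:ℝ) < 1+(t-12)/3 := by linarith
  have hx' : (162753:ℝ)*(1+(t-12)/3)^3 ≤ x := by
    have he12 : (162753:ℝ) ≤ Real.exp 12 := by
      have h1 : (2.7182818283:ℝ) < Real.exp 1 := Real.exp_one_gt_d9
      have h2 : (2.7182818283:ℝ)^(12:ℕ) ≤ (Real.exp 1)^(12:ℕ) :=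
        pow_le_pow_left₀ (by norm_num) (le_of_lt h1) 12
      have h3 : (162753:ℝ) ≤ (2.7182818283:ℝ)^(12:ℕ) := by norm_num
      have h4 : (Real.exp 1)^(12:ℕ) = Real.exp 12 := by
        rw [← Real.exp_nat_mul]; norm_num
      linarith
    have hu : (1+(t-12)/3)^3 ≤ Real.exp (t-12) := by
      have h5 := Real.add_one_le_exp ((t-12)/3)
      have h6 : (1+(t-12)/3)^3 ≤ (Real.exp ((t-12)/3))^(3:ℕ) :=
        pow_le_pow_left₀ (le_of_lt hw0) (by linarith) 3
      have h7 : (Real.exp ((t-12)/3))^(3:ℕ) = Real.exp (t-12) := by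
        rw [← Real.exp_nat_mul]; ring_nf
      linarith
    have h8 : Real.exp 12 * Real.exp (t-12) = x := by
      rw [← Real.exp_add]
      have e : (12:ℝ)+(t-12) = t := by ring
      rw [e, ← hxt, Real.exp_log hx0]
    calc (162753:ℝ)*(1+(t-12)/3)^3 ≤ Real.exp 12 * Real.exp (t-12) :=
          mul_le_mul he12 hu (by positivity) (le_of_lt (Real.exp_pos 12))
      _ = x := h8
  set A := 515 * L / (x * (2*t)^2) with hAdef
  have hA0 : 0 ≤ A := by positivity
  have hc3 : (0:ℝ) < (1+(t-12)/3)^3 := pow_pos hw0 3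
  have hden0 : (0:ℝ) < 4*(162753*(1+(t-12)/3)^3)*t^2 := by
    have := pow_pos ht0 2
    nlinarith
  have h12 : (0:ℝ) ≤ t - 12 := by linarith
  have hA : A ≤ 0.000072 := by
    have s1 : A ≤ 515*((307/287:ℝ)*t + (66204437/287000000:ℝ))/(4*(162753*(1+(t-12)/3)^3)*t^2) := by
      rw [hAdef]
      apply div_le_div₀ (by positivity) (by nlinarith) hden0
      nlinarith [hx', pow_pos ht0 2, sq_nonneg t]
    have s2 : 515*((307/287:ℝ)*t + (66204437/287000000:ℝ))/(4*(162753*(1+(t-12)/3)^3)*t^2) ≤ 0.000072 := by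
      rw [div_le_iff₀ hden0]
      nlinarith [h12, sq_nonneg (t-12), mul_nonneg (mul_nonneg h12 h12) h12,
        mul_nonneg (mul_nonneg (mul_nonneg h12 h12) h12) h12,
        mul_nonneg (mul_nonneg (mul_nonneg (mul_nonneg h12 h12) h12) h12) h12]
    linarith
  have hA1 : A ≤ 1 := by linarith
  have hexp : Real.exp A ≤ 1 + A + A^2/2 + (2/9)*A^3 := expcube hA0 hA1
  have hexpΨ : Real.exp A ≤ 1.0000721 := by
    have h2 := pow_le_pow_left₀ hA0 hA 2
    have h3 := pow_le_pow_left₀ hA0 hA 3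
    norm_num at h2 h3
    linarith
  have hL2 : L^2 ≤ ((307/287:ℝ)*t + (66204437/287000000:ℝ))^2 := pow_le_pow_left₀ hL0 hLβ 2
  have hquad : 1.0000721*(((307/287:ℝ)*t + (66204437/287000000:ℝ))^2/2) ≤ 0.6144*t^2 := by
    nlinarith [sq_nonneg (t-12), h12]
  calc Real.exp A * (L^2/2) ≤ 1.0000721 * (L^2/2) :=
        mul_le_mul_of_nonneg_right hexpΨ (by positivity)
    _ ≤ 1.0000721*(((307/287:ℝ)*t + (66204437/287000000:ℝ))^2/2) := by nlinarith [hL2]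
    _ ≤ 0.6144 * t^2 := hquad

lemma main_ineq (x t L : ℝ) (hxt : Real.log x = t) (hx632 : (632.455:ℝ) ≤ x)
    (ht6 : (6.4496:ℝ) ≤ t)
    (hL0 : 0 ≤ L) (hLub : L ≤ t - 1.5963 + Real.log (t + 2.3423)) :
    Real.exp (515 * L / (x * (2*t)^2)) * (L^2/2) ≤ 0.6144 * t^2 := by
  have hx0 : (0:ℝ) < x := by linarith
  rcases le_or_gt t (6.4546:ℝ) with hcase0 | hnext0
  · exact step t L x (8.7944:ℝ) (2.174116:ℝ) (632.455:ℝ) (6.4496:ℝ) (6.4546:ℝ) (1.0350186:ℝ) (12243/10993:ℝ) (-(107074607/687062500):ℝ)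
        (by norm_num) (by norm_num) (by norm_num) ls1 hL0 hLub ht6 hcase0 (by norm_num)
        (by norm_num) hx632 (by norm_num) (by norm_num)
        (fun u h1 h2 => by nlinarith [mul_nonneg (sub_nonneg.2 h1) (sub_nonneg.2 h2), sq_nonneg (u - (6.4496:ℝ)), sub_nonneg.2 h1])
  rcases le_or_gt t (6.4746:ℝ) with hcase1 | hnext1
  · have hxX1 : (635.619:ℝ) ≤ x := by
      have hlx := lX2
      calc (635.619:ℝ) = Real.exp (Real.log (635.619:ℝ)) := (Real.exp_log (by norm_num)).symm
        _ ≤ Real.exp t := Real.exp_le_exp.2 (by linarith [hnext0])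
        _ = x := by rw [← hxt, Real.exp_log hx0]
    exact step t L x (8.8069:ℝ) (2.175536:ℝ) (635.619:ℝ) (6.4546:ℝ) (6.4746:ℝ) (1.0348984:ℝ) (98069/88069:ℝ) (-(3408316179/22017250000):ℝ)
        (by norm_num) (by norm_num) (by norm_num) ls2 hL0 hLub (le_of_lt hnext0) hcase1 (by norm_num)
        (by norm_num) hxX1 (by norm_num) (by norm_num)
        (fun u h1 h2 => by nlinarith [mul_nonneg (sub_nonneg.2 h1) (sub_nonneg.2 h2), sq_nonneg (u - (6.4546:ℝ)), sub_nonneg.2 h1])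
  rcases le_or_gt t (6.5246:ℝ) with hcase2 | hnext2
  · have hxX2 : (648.459:ℝ) ≤ x := by
      have hlx := lX3
      calc (648.459:ℝ) = Real.exp (Real.log (648.459:ℝ)) := (Real.exp_log (by norm_num)).symm
        _ ≤ Real.exp t := Real.exp_le_exp.2 (by linarith [hnext1])
        _ = x := by rw [← hxt, Real.exp_log hx0]
    exact step t L x (8.8419:ℝ) (2.179502:ℝ) (648.459:ℝ) (6.4746:ℝ) (6.5246:ℝ) (1.0342538:ℝ) (98419/88419:ℝ) (-(6714931181/44209500000):ℝ)
        (by norm_num) (by norm_num) (by norm_num) ls3 hL0 hLub (le_of_lt hnext1) hcase2 (by norm_num)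
        (by norm_num) hxX2 (by norm_num) (by norm_num)
        (fun u h1 h2 => by nlinarith [mul_nonneg (sub_nonneg.2 h1) (sub_nonneg.2 h2), sq_nonneg (u - (6.4746:ℝ)), sub_nonneg.2 h1])
  rcases le_or_gt t (6.7246:ℝ) with hcase3 | hnext3
  · have hxX3 : (681.706:ℝ) ≤ x := by
      have hlx := lX4
      calc (681.706:ℝ) = Real.exp (Real.log (681.706:ℝ)) := (Real.exp_log (by norm_num)).symm
        _ ≤ Real.exp t := Real.exp_le_exp.2 (by linarith [hnext2])
        _ = x := by rw [← hxt, Real.exp_log hx0]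
    exact step t L x (8.9669:ℝ) (2.193541:ℝ) (681.706:ℝ) (6.5246:ℝ) (6.7246:ℝ) (1.03307:ℝ) (99669/89669:ℝ) (-(12691996771/89669000000):ℝ)
        (by norm_num) (by norm_num) (by norm_num) ls4 hL0 hLub (le_of_lt hnext2) hcase3 (by norm_num)
        (by norm_num) hxX3 (by norm_num) (by norm_num)
        (fun u h1 h2 => by nlinarith [mul_nonneg (sub_nonneg.2 h1) (sub_nonneg.2 h2), sq_nonneg (u - (6.5246:ℝ)), sub_nonneg.2 h1])
  rcases le_or_gt t (7.5246:ℝ) with hcase4 | hnext4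
  · have hxX4 : (832.638:ℝ) ≤ x := by
      have hlx := lX5
      calc (832.638:ℝ) = Real.exp (Real.log (832.638:ℝ)) := (Real.exp_log (by norm_num)).symm
        _ ≤ Real.exp t := Real.exp_le_exp.2 (by linarith [hnext3])
        _ = x := by rw [← hxt, Real.exp_log hx0]
    exact step t L x (9.4669:ℝ) (2.247802:ℝ) (832.638:ℝ) (6.7246:ℝ) (7.5246:ℝ) (1.0285023:ℝ) (104669/94669:ℝ) (-(4784478581/47334500000):ℝ)
        (by norm_num) (by norm_num) (by norm_num) ls5 hL0 hLub (le_of_lt hnext3) hcase4 (by norm_num)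
        (by norm_num) hxX4 (by norm_num) (by norm_num)
        (fun u h1 h2 => by nlinarith [mul_nonneg (sub_nonneg.2 h1) (sub_nonneg.2 h2), sq_nonneg (u - (6.7246:ℝ)), sub_nonneg.2 h1])
  rcases le_or_gt t (10.0246:ℝ) with hcase5 | hnext5
  · have hxX5 : (1853.071:ℝ) ≤ x := by
      have hlx := lX6
      calc (1853.071:ℝ) = Real.exp (Real.log (1853.071:ℝ)) := (Real.exp_log (by norm_num)).symm
        _ ≤ Real.exp t := Real.exp_le_exp.2 (by linarith [hnext4])
        _ = x := by rw [← hxt, Real.exp_log hx0]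
    exact step t L x (11.1169:ℝ) (2.408467:ℝ) (1853.071:ℝ) (7.5246:ℝ) (10.0246:ℝ) (1.013527:ℝ) (121169/111169:ℝ) (2541793223/111169000000:ℝ)
        (by norm_num) (by norm_num) (by norm_num) ls6 hL0 hLub (le_of_lt hnext4) hcase5 (by norm_num)
        (by norm_num) hxX5 (by norm_num) (by norm_num)
        (fun u h1 h2 => by nlinarith [mul_nonneg (sub_nonneg.2 h1) (sub_nonneg.2 h2), sq_nonneg (u - (7.5246:ℝ)), sub_nonneg.2 h1])
  rcases le_or_gt t (12:ℝ) with hcase6 | hnext6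
  · have hxX6 : (22575.029:ℝ) ≤ x := by
      have hlx := lX7
      calc (22575.029:ℝ) = Real.exp (Real.log (22575.029:ℝ)) := (Real.exp_log (by norm_num)).symm
        _ ≤ Real.exp t := Real.exp_le_exp.2 (by linarith [hnext5])
        _ = x := by rw [← hxt, Real.exp_log hx0]
    exact step t L x (13.3546:ℝ) (2.591862:ℝ) (22575.029:ℝ) (10.0246:ℝ) (12:ℝ) (1.0007422:ℝ) (71773/66773:ℝ) (5707580713/33386500000:ℝ)
        (by norm_num) (by norm_num) (by norm_num) ls7 hL0 hLub (le_of_lt hnext5) hcase6 (by norm_num)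
        (by norm_num) hxX6 (by norm_num) (by norm_num)
        (fun u h1 h2 => by nlinarith [mul_nonneg (sub_nonneg.2 h1) (sub_nonneg.2 h2), sq_nonneg (u - (10.0246:ℝ)), sub_nonneg.2 h1])
  exact tail_step t L x (le_of_lt hnext6) hxt hx0 hL0 hLub

theorem stmt_10 (q σ S : ℝ) (hq : 4 * 10 ^ 5 ≤ q)
    (hS : S = 2 / Real.pi ^ 2 * Real.sqrt q * (Real.log (Real.pi ^ 2 / 4 * Real.sqrt q + 10.15) + 1.4326))
    (hσl : 1 - 515 / (Real.sqrt q * (Real.log q) ^ 2) ≤ σ) (hσu : σ < 1) :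
    S ^ (1 - σ) * (1 / 2 * (Real.log S) ^ 2) ≤ 0.1536 * (Real.log q) ^ 2 := by
  have hq0 : (0:ℝ) ≤ q := by linarith
  set x := Real.sqrt q with hxdef
  have hx : (632.455:ℝ) ≤ x := by
    rw [hxdef, show (632.455:ℝ) = Real.sqrt (632.455^2) from (Real.sqrt_sq (by norm_num)).symm]
    exact Real.sqrt_le_sqrt (by norm_num; linarith)
  have hx0 : (0:ℝ) < x := by linarith
  have hπl : (3.141592:ℝ) < Real.pi := Real.pi_gt_d6
  have hπu : Real.pi < 3.141593 := Real.pi_lt_d6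
  have hπ0 : (0:ℝ) < Real.pi := by linarith
  set t := Real.log x with htdef
  have hxsq : x^2 = q := Real.sq_sqrt hq0
  have hlogq : Real.log q = 2*t := by
    rw [← hxsq, htdef, Real.log_pow]; push_cast; ring
  have ht6 : (6.4496:ℝ) ≤ t := by
    have h1 := l632
    have h2 : Real.log 632.455 ≤ Real.log x := Real.log_le_log (by norm_num) hx
    linarith
  -- positivity of S and its pieces
  have hP1 : (1:ℝ) ≤ Real.pi^2/4*x + 10.15 := by nlinarith
  have hlogP0 : 0 ≤ Real.log (Real.pi^2/4*x + 10.15) := Real.log_nonneg hP1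
  have hP0 : (0:ℝ) < Real.log (Real.pi^2/4*x + 10.15) + 1.4326 := by linarith
  have hc0 : (0:ℝ) < 2/Real.pi^2 := by positivity
  have hS0 : (0:ℝ) < S := by rw [hS]; exact mul_pos (mul_pos hc0 hx0) hP0
  set L := Real.log S with hLdef
  have hS1 : (1:ℝ) ≤ S := by
    rw [hS]
    have hπsq : Real.pi^2 ≤ 10 := by nlinarith
    rw [show 2/Real.pi^2*x*(Real.log (Real.pi^2/4*x+10.15)+1.4326)
        = 2*x*(Real.log (Real.pi^2/4*x+10.15)+1.4326)/Real.pi^2 by ring]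
    rw [le_div_iff₀ (by positivity)]
    nlinarith
  have hL0 : 0 ≤ L := Real.log_nonneg hS1
  -- upper bound on L
  have hLub : L ≤ t - 1.5963 + Real.log (t + 2.3423) := by
    have hsplit : L = Real.log (2/Real.pi^2) + Real.log x
        + Real.log (Real.log (Real.pi^2/4*x+10.15)+1.4326) := by
      rw [hLdef, hS, Real.log_mul (by positivity) (ne_of_gt hP0),
          Real.log_mul (ne_of_gt hc0) (ne_of_gt hx0)]
    have h1 : Real.log (2/Real.pi^2) ≤ -1.5963 := by
      rw [Real.log_div (by norm_num) (by positivity), Real.log_pow]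
      have hpil : (1.1447236:ℝ) ≤ Real.log Real.pi :=
        le_trans lpi (Real.log_le_log (by norm_num) (le_of_lt hπl))
      have h2u : Real.log 2 < 0.6931471808 := Real.log_two_lt_d9
      push_cast
      linarith
    have harg : Real.pi^2/4*x + 10.15 ≤ 2.4835*x := by
      have h9 : Real.pi^2/4 ≤ 2.46740175 := by nlinarith
      have h10 : (0:ℝ) ≤ (2.46740175 - Real.pi^2/4) * x :=
        mul_nonneg (by linarith) (le_of_lt hx0)
      nlinarith [h10, hx]
    have hlog1 : Real.log (Real.pi^2/4*x+10.15) ≤ Real.log 2.4835 + Real.log x := by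
      rw [← Real.log_mul (by norm_num) (ne_of_gt hx0)]
      exact Real.log_le_log (by linarith) harg
    have hPle : Real.log (Real.pi^2/4*x+10.15)+1.4326 ≤ t + 2.3423 := by
      have := l2483
      linarith
    have h2 : Real.log (Real.log (Real.pi^2/4*x+10.15)+1.4326) ≤ Real.log (t+2.3423) :=
      Real.log_le_log hP0 hPle
    linarith [hsplit, h1, h2]
  -- reduce to main inequality
  have h1σ0 : 0 ≤ 1 - σ := by linarith
  have hrpow : S ^ (1-σ) = Real.exp ((1-σ) * L) := by
    rw [Real.rpow_def_of_pos hS0, hLdef, mul_comm]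
  have hδ : (1-σ) * L ≤ 515 * L / (x * (2*t)^2) := by
    have hd : 1-σ ≤ 515 / (x * (2*t)^2) := by
      have : Real.sqrt q * (Real.log q)^2 = x * (2*t)^2 := by rw [hlogq]
      rw [← this]; linarith
    calc (1-σ)*L ≤ (515/(x*(2*t)^2))*L := mul_le_mul_of_nonneg_right hd hL0
      _ = 515*L/(x*(2*t)^2) := by ring
  have hexp : Real.exp ((1-σ)*L) ≤ Real.exp (515*L/(x*(2*t)^2)) := Real.exp_le_exp.2 hδ
  have hmain := main_ineq x t L htdef.symm hx ht6 hL0 hLub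
  calc S^(1-σ) * (1/2*L^2) = Real.exp ((1-σ)*L) * (1/2*L^2) := by rw [hrpow]
    _ ≤ Real.exp (515*L/(x*(2*t)^2)) * (1/2*L^2) :=
        mul_le_mul_of_nonneg_right hexp (by positivity)
    _ = Real.exp (515*L/(x*(2*t)^2)) * (L^2/2) := by ring
    _ ≤ 0.6144*t^2 := hmain
    _ = 0.1536*(Real.log q)^2 := by rw [hlogq]; ring
end

section
/- Let q ≥ 10⁷ be a real number and set S = (2/π²)·√q·(log((π²/4)√q + 10.15) + 1.4326). If 1 − 80/(√q (log q)²) ≤ σ < 1, then S^{1−σ} · (1/2)·(log S)² ≤ 0.15 · (log q)². -/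
set_option maxHeartbeats 1600000

private lemma exp_lb' (t : ℝ) (ht : 0 ≤ t) (n : ℕ) (hn : 0 < n) :
    (1 + t / n) ^ n ≤ Real.exp t := by
  have h := Real.add_one_le_exp (t / n)
  have h0 : (0:ℝ) ≤ 1 + t / n := by positivity
  have hn' : (n:ℝ) ≠ 0 := Nat.cast_ne_zero.mpr hn.ne'
  calc (1 + t / n) ^ n ≤ (Real.exp (t / n)) ^ n := by
        exact pow_le_pow_left₀ h0 (by linarith) n
    _ = Real.exp t := by
        rw [← Real.exp_nat_mul]
        congr 1
        field_simp

private lemma exp_ub' (t : ℝ) (ht : 0 ≤ t) (n : ℕ) (hn : 0 < n) (h1 : t / n < 1) :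
    Real.exp t * (1 - t / n) ^ n ≤ 1 := by
  have h := Real.add_one_le_exp (-(t / n))
  have h0 : (0:ℝ) < 1 - t / n := by linarith
  have hn' : (n:ℝ) ≠ 0 := Nat.cast_ne_zero.mpr hn.ne'
  have hp : (1 - t / n) ^ n ≤ Real.exp (-t) := by
    calc (1 - t / n) ^ n ≤ (Real.exp (-(t / n))) ^ n := by
          exact pow_le_pow_left₀ (by linarith) (by linarith) n
      _ = Real.exp (-t) := by
          rw [← Real.exp_nat_mul]
          congr 1
          field_simp
  calc Real.exp t * (1 - t / n) ^ n ≤ Real.exp t * Real.exp (-t) :=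
        mul_le_mul_of_nonneg_left hp (Real.exp_pos t).le
    _ = 1 := by rw [← Real.exp_add]; simp

theorem stmt_11 (q σ S : ℝ) (hq : 10 ^ 7 ≤ q)
    (hS : S = 2 / Real.pi ^ 2 * Real.sqrt q * (Real.log (Real.pi ^ 2 / 4 * Real.sqrt q + 10.15) + 1.4326))
    (hσl : 1 - 80 / (Real.sqrt q * (Real.log q) ^ 2) ≤ σ) (hσu : σ < 1) :
    S ^ (1 - σ) * (1 / 2 * (Real.log S) ^ 2) ≤ 0.15 * (Real.log q) ^ 2 := by
  have hq0 : (0:ℝ) < q := by nlinarith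
  set x := Real.sqrt q with hxdef
  set l := Real.log q with hldef
  -- sqrt bound
  have hx : (3162:ℝ) ≤ x := by
    have h1 : Real.sqrt ((3162:ℝ)^2) ≤ Real.sqrt q := Real.sqrt_le_sqrt (by nlinarith)
    rwa [Real.sqrt_sq (by norm_num)] at h1
  have hx0 : (0:ℝ) < x := by linarith
  have hexp1ub : Real.exp 1 < 2.7182818286 := Real.exp_one_lt_d9
  have hexp1lb : 2.7182818283 < Real.exp 1 := Real.exp_one_gt_d9
  have hexp1pos : (0:ℝ) < Real.exp 1 := Real.exp_pos 1
  -- log q ≥ 16.1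
  have hl : (16.1:ℝ) ≤ l := by
    rw [hldef, Real.le_log_iff_exp_le hq0]
    have h1 : Real.exp 16.1 = (Real.exp 1)^16 * Real.exp 0.1 := by
      rw [← Real.exp_nat_mul, ← Real.exp_add]; norm_num
    have h2 := exp_ub' 0.1 (by norm_num) 1 one_pos (by norm_num)
    have h2' : Real.exp 0.1 ≤ 1.112 := by
      have hP : (0.9:ℝ) ≤ (1 - 0.1 / ((1:ℕ):ℝ)) ^ 1 := by norm_num
      nlinarith [Real.exp_pos (0.1:ℝ)]
    have h3 : (Real.exp 1)^16 ≤ 2.7182818286^16 :=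
      pow_le_pow_left₀ hexp1pos.le hexp1ub.le 16
    calc Real.exp 16.1 = (Real.exp 1)^16 * Real.exp 0.1 := h1
      _ ≤ 2.7182818286^16 * 1.112 := by
          apply mul_le_mul h3 h2' (Real.exp_pos _).le (by positivity)
      _ ≤ 10^7 := by norm_num
      _ ≤ q := hq
  have hl0 : (0:ℝ) < l := by linarith
  have hlogx : Real.log x = l / 2 := Real.log_sqrt hq0.le
  -- pi bounds
  have hpil : (3.141592:ℝ) < Real.pi := Real.pi_gt_d6
  have hpiu : Real.pi < 3.141593 := Real.pi_lt_d6
  have hpi2l : (9.8668:ℝ) ≤ Real.pi ^ 2 := by nlinarith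
  have hpi2u : Real.pi ^ 2 ≤ 9.8697 := by nlinarith
  have harg : (1:ℝ) ≤ Real.pi ^ 2 / 4 * x + 10.15 := by nlinarith
  have hinnerlog0 : (0:ℝ) ≤ Real.log (Real.pi ^ 2 / 4 * x + 10.15) := Real.log_nonneg harg
  have hApos : (0:ℝ) < 2 / Real.pi ^ 2 := by positivity
  have hA2 : (2:ℝ) / Real.pi ^ 2 ≤ 0.2027 := by
    rw [div_le_iff₀ (by positivity)]; nlinarith
  have hA : (0.2:ℝ) ≤ 2 / Real.pi ^ 2 := by
    rw [le_div_iff₀ (by positivity)]; nlinarith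
  -- S ≥ 1
  have hS1 : (1:ℝ) ≤ S := by
    rw [hS]
    have hI : (1.4326:ℝ) ≤ Real.log (Real.pi ^ 2 / 4 * x + 10.15) + 1.4326 := by linarith
    have hAx : (0.2:ℝ) * 3162 ≤ 2 / Real.pi ^ 2 * x :=
      mul_le_mul hA hx (by norm_num) hApos.le
    calc (1:ℝ) ≤ (0.2 * 3162) * 1.4326 := by norm_num
      _ ≤ (2 / Real.pi ^ 2 * x) * (Real.log (Real.pi ^ 2 / 4 * x + 10.15) + 1.4326) :=
          mul_le_mul hAx hI (by norm_num) (by positivity)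
  have hS0 : (0:ℝ) < S := by linarith
  have hlogS0 : (0:ℝ) ≤ Real.log S := Real.log_nonneg hS1
  -- exp numeric facts
  have hE1 : (2.4707:ℝ) ≤ Real.exp 0.9065 := by
    have h := exp_lb' 0.9065 (by norm_num) 256 (by norm_num)
    have h2 : (2.4707:ℝ) ≤ (1 + (0.9065:ℝ) / ((256:ℕ):ℝ)) ^ 256 := by norm_num
    linarith
  have hE2 : (10.6:ℝ) ≤ Real.exp 2.3616 := by
    have h1 : Real.exp 2.3616 = Real.exp 1 * Real.exp 1 * Real.exp 0.3616 := by
      rw [← Real.exp_add, ← Real.exp_add]; norm_num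
    have h := exp_lb' 0.3616 (by norm_num) 256 (by norm_num)
    have h2 : (1.4349:ℝ) ≤ (1 + (0.3616:ℝ) / ((256:ℕ):ℝ)) ^ 256 := by norm_num
    have h4 : (1.4349:ℝ) ≤ Real.exp 0.3616 := by linarith
    have h5 : (2.7182818283:ℝ) * 2.7182818283 ≤ Real.exp 1 * Real.exp 1 :=
      mul_le_mul hexp1lb.le hexp1lb.le (by norm_num) hexp1pos.le
    calc (10.6:ℝ) ≤ (2.7182818283 * 2.7182818283) * 1.4349 := by norm_num
      _ ≤ (Real.exp 1 * Real.exp 1) * Real.exp 0.3616 :=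
          mul_le_mul h5 h4 (by norm_num) (by positivity)
      _ = Real.exp 2.3616 := h1.symm
  have hE3 : (0.2027:ℝ) ≤ Real.exp (-1.59) := by
    have h := exp_ub' 0.59 (by norm_num) 256 (by norm_num) (by norm_num)
    have hP : (0.5539:ℝ) ≤ (1 - (0.59:ℝ) / ((256:ℕ):ℝ)) ^ 256 := by norm_num
    have h2 : Real.exp 0.59 ≤ 1.8055 := by
      nlinarith [Real.exp_pos (0.59:ℝ)]
    have h3 : Real.exp 1.59 ≤ 4.9086 := by
      have heq : Real.exp 1.59 = Real.exp 1 * Real.exp 0.59 := by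
        rw [← Real.exp_add]; norm_num
      rw [heq]
      calc Real.exp 1 * Real.exp 0.59 ≤ 2.7182818286 * 1.8055 :=
            mul_le_mul hexp1ub.le h2 (Real.exp_pos _).le (by norm_num)
        _ ≤ 4.9086 := by norm_num
    have h4 : Real.exp (-1.59) * Real.exp 1.59 = 1 := by
      rw [← Real.exp_add]; norm_num
    nlinarith [Real.exp_pos (-(1.59:ℝ)), Real.exp_pos (1.59:ℝ)]
  -- log numeric bounds
  have hlog2707 : Real.log 2.4707 ≤ 0.9065 := by
    rw [Real.log_le_iff_le_exp (by norm_num)]; exact hE1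
  have hlog106 : Real.log 10.6 ≤ 2.3616 := by
    rw [Real.log_le_iff_le_exp (by norm_num)]; exact hE2
  have hlog2027 : Real.log 0.2027 ≤ -1.59 := by
    have h := Real.log_le_log (by norm_num) hE3
    rwa [Real.log_exp] at h
  -- S upper bound
  have hargle : Real.pi ^ 2 / 4 * x + 10.15 ≤ 2.4707 * x := by nlinarith
  have hlogarg : Real.log (Real.pi ^ 2 / 4 * x + 10.15) ≤ l / 2 + 0.9065 := by
    calc Real.log (Real.pi ^ 2 / 4 * x + 10.15) ≤ Real.log (2.4707 * x) :=
          Real.log_le_log (by linarith) hargle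
      _ = Real.log 2.4707 + Real.log x := Real.log_mul (by norm_num) (by positivity)
      _ ≤ 0.9065 + l / 2 := by rw [hlogx]; linarith
      _ = l / 2 + 0.9065 := by ring
  have hSub : S ≤ 0.2027 * x * (l / 2 + 2.34) := by
    rw [hS]
    have hI : Real.log (Real.pi ^ 2 / 4 * x + 10.15) + 1.4326 ≤ l / 2 + 2.34 := by linarith
    have hAx : 2 / Real.pi ^ 2 * x ≤ 0.2027 * x :=
      mul_le_mul_of_nonneg_right hA2 hx0.le
    exact mul_le_mul hAx hI (by linarith) (by positivity)
  -- log S bound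
  have hlogS : Real.log S ≤ 29 / 53 * l := by
    have hMpos : (0:ℝ) < l / 2 + 2.34 := by linarith
    have h1 : Real.log S ≤ Real.log (0.2027 * x * (l / 2 + 2.34)) :=
      Real.log_le_log hS0 hSub
    have h2 : Real.log (0.2027 * x * (l / 2 + 2.34)) =
        Real.log 0.2027 + Real.log x + Real.log (l / 2 + 2.34) := by
      rw [Real.log_mul (by positivity) (by positivity),
          Real.log_mul (by norm_num) (by positivity)]
    have h3 : Real.log (l / 2 + 2.34) ≤ (l / 2 + 2.34) * (5 / 53) + 1.3616 := by
      have heq : Real.log (l / 2 + 2.34) = Real.log ((l / 2 + 2.34) * (5 / 53)) + Real.log 10.6 := by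
        rw [← Real.log_mul (by positivity) (by norm_num)]
        congr 1
        ring
      have h4 := Real.log_le_sub_one_of_pos (show (0:ℝ) < (l / 2 + 2.34) * (5 / 53) by positivity)
      rw [heq]
      linarith
    rw [hlogx] at h2
    rw [h2] at h1
    linarith
  -- exponent bound
  have hσ : 1 - σ ≤ 80 / (x * l ^ 2) := by linarith
  have hσ0 : (0:ℝ) ≤ 1 - σ := by linarith
  have hxl : (50908:ℝ) ≤ x * l := by nlinarith
  have he0 : Real.log S * (1 - σ) ≤ 0.00086 := by
    have hd2 : 80 / (x * l ^ 2) ≤ 80 / (50908 * l) := by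
      apply div_le_div_of_nonneg_left (by norm_num) (by positivity)
      nlinarith
    have h1 : Real.log S * (1 - σ) ≤ (29 / 53 * l) * (80 / (50908 * l)) :=
      mul_le_mul hlogS (hσ.trans hd2) hσ0 (by positivity)
    have h2 : (29 / 53 * l) * (80 / (50908 * l)) = 2320 / 2698124 := by
      field_simp
      ring
    rw [h2] at h1
    linarith
  -- exp factor bound
  have hexpe : Real.exp (Real.log S * (1 - σ)) ≤ 1.00087 := by
    have h1 : Real.exp (Real.log S * (1 - σ)) ≤ Real.exp 0.00086 := Real.exp_le_exp.mpr he0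
    have h2 := exp_ub' 0.00086 (by norm_num) 1 one_pos (by norm_num)
    have hP : (0.99914:ℝ) ≤ (1 - (0.00086:ℝ) / ((1:ℕ):ℝ)) ^ 1 := by norm_num
    nlinarith [Real.exp_pos (0.00086:ℝ)]
  -- final assembly
  have hrpow : S ^ (1 - σ) = Real.exp (Real.log S * (1 - σ)) := Real.rpow_def_of_pos hS0 _
  have hsq : Real.log S ^ 2 ≤ (29 / 53 * l) ^ 2 := pow_le_pow_left₀ hlogS0 hlogS 2
  rw [hrpow]
  calc Real.exp (Real.log S * (1 - σ)) * (1 / 2 * Real.log S ^ 2)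
      ≤ 1.00087 * (1 / 2 * (29 / 53 * l) ^ 2) := by
        apply mul_le_mul hexpe (by linarith) (by positivity) (by norm_num)
    _ ≤ 0.15 * l ^ 2 := by nlinarith [sq_nonneg l]
end
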